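/- In the example network (the path a — b — c with V_src = {a,c}, V_ld = {b}, α = 1), with defense V_d = ∅ one has p(∅,∅) = 0, p({b},∅) = 1, p({a,c},∅) = 1 and p({a,b,c},∅) = 1. Hence p({a,b,c},∅) − p({a,c},∅) < p({b},∅) − p(∅,∅), so the map V_a ↦ p(V_a,∅) is not supermodular. Together with the failure of submodularity, the payoff with the defender's strategy fixed is neither submodular nor supermodular. -/

import Mathlib

open scoped Classical

noncomputable section

variable {V : Type*} [Fintype V] [DecidableEq V]

/-- The number of shortest paths between `s` and `t` in `G` (σ_G(s,t)). -/
def numSP (G : SimpleGraph V) (s t : V) : ℕ :=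
  Nat.card {w : G.Walk s t // w.length = G.dist s t}

/-- The number of shortest paths between `s` and `t` in `G` passing through edge `e`
(σ_G(s,t | e)). -/
def numSPthru (G : SimpleGraph V) (s t : V) (e : Sym2 V) : ℕ :=
  Nat.card {w : G.Walk s t // w.length = G.dist s t ∧ e ∈ w.edges}

/-- `N_G(t)`: the vertices of `Vsrc \ {t}` reachable from `t` in `G` at minimum distance
from `t`. -/
def nearestSources (Vsrc : Finset V) (G : SimpleGraph V) (t : V) : Finset V :=
  ((Vsrc.erase t).filter (fun s => G.Reachable t s)).filter
    (fun s => ∀ s' ∈ (Vsrc.erase t).filter (fun s'' => G.Reachable t s''),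
      G.dist t s ≤ G.dist t s')

/-- The load of edge `e` in `G`:
`load_G(e) = Σ_{t ∈ Vld} Σ_{s ∈ N_G(t)} σ_G(s,t|e) / (|N_G(t)|·σ_G(s,t))`. -/
def eload (Vsrc Vld : Finset V) (G : SimpleGraph V) (e : Sym2 V) : ℝ :=
  ∑ t ∈ Vld, ∑ s ∈ nearestSources Vsrc G t,
    (numSPthru G s t e : ℝ) / (((nearestSources Vsrc G t).card : ℝ) * (numSP G s t : ℝ))

/-- The failure operator: removes every edge whose current load exceeds its capacity
`c_e = (1+α)·load_{G₀}(e)`. -/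
def Fop (Vsrc Vld : Finset V) (G0 : SimpleGraph V) (α : ℝ) (G : SimpleGraph V) :
    SimpleGraph V where
  Adj u v := G.Adj u v ∧ eload Vsrc Vld G s(u, v) ≤ (1 + α) * eload Vsrc Vld G0 s(u, v)
  symm := by
    constructor
    intro u v h
    refine ⟨h.1.symm, ?_⟩
    rw [Sym2.eq_swap]
    exact h.2
  loopless := ⟨fun v h => G.irrefl h.1⟩

/-- `F*(G)`: the fixed point reached by iterating the failure operator (reached after at
most `|E|+1 ≤ (card V)^2` applications, since each non-trivial application removes an edge). -/
def Fstar (Vsrc Vld : Finset V) (G0 : SimpleGraph V) (α : ℝ) (G : SimpleGraph V) :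
    SimpleGraph V :=
  (Fop Vsrc Vld G0 α)^[Fintype.card V ^ 2] G

/-- `G − S`: the (induced) subgraph obtained by deleting the vertices of `S`. -/
def deleteVerts (G : SimpleGraph V) (S : Finset V) : SimpleGraph V where
  Adj u v := G.Adj u v ∧ u ∉ S ∧ v ∉ S
  symm := ⟨fun u v h => ⟨h.1.symm, h.2.2, h.2.1⟩⟩
  loopless := ⟨fun v h => G.irrefl h.1⟩

/-- `disc(G)`: the number of load nodes from which no source (other than itself) is
reachable in `G`. -/
def disc (Vsrc Vld : Finset V) (G : SimpleGraph V) : ℕ :=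
  (Vld.filter (fun t => ∀ s ∈ Vsrc, s ≠ t → ¬ G.Reachable t s)).card

/-- The payoff `p(V_a,V_d) = disc(F*(G₀ − (V_a \ V_d)))`. -/
def payoff (Vsrc Vld : Finset V) (G0 : SimpleGraph V) (α : ℝ) (Va Vd : Finset V) : ℕ :=
  disc Vsrc Vld (Fstar Vsrc Vld G0 α (deleteVerts G0 (Va \ Vd)))

/-- `f` is submodular: adding an element to a larger set yields a smaller increment. -/
def IsSubmodular {β : Type*} [DecidableEq β] (f : Finset β → ℤ) : Prop :=
  ∀ ⦃S1 S2 : Finset β⦄, S1 ⊆ S2 → ∀ s ∉ S2,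
    f (insert s S2) - f S2 ≤ f (insert s S1) - f S1

/-- `f` is supermodular: adding an element to a larger set yields a larger increment. -/
def IsSupermodular {β : Type*} [DecidableEq β] (f : Finset β → ℤ) : Prop :=
  ∀ ⦃S1 S2 : Finset β⦄, S1 ⊆ S2 → ∀ s ∉ S2,
    f (insert s S1) - f S1 ≤ f (insert s S2) - f S2

/-!
Deleting `b`, or both sources `a` and `c`, leaves no edge at all, so `b` is cut off and the payoff
is `1`; the intact path leaves `b` connected, so `p(∅, ∅) = 0`. Deleting a single source, say `c`,
leaves `b` fed by `a` alone: the load on `ab` doubles from `1/2` to `1`, which is exactly its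
capacity `(1 + α) · 1/2` at `α = 1`, so the edge survives and `p({c}, ∅) = 0`. Hence
`p({a,b,c}) - p({a,c}) = 0 < 1 = p({b}) - p(∅)` breaks supermodularity, and
`p({a,c}) - p({a}) = 1 > 0 = p({c}) - p(∅)` breaks submodularity.
-/

open SimpleGraph Finset

section ShortestPaths

variable {W : Type*} {G : SimpleGraph W} {u v : W}

theorem SimpleGraph.Walk.eq_toWalk_of_length_eq_one (p : G.Walk u v) (hp : p.length = 1) :
    p = (Walk.adj_of_length_eq_one hp).toWalk := by
  cases p with
  | nil => simp at hp
  | cons h q =>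
    cases q with
    | nil => rfl
    | cons _ _ => simp at hp

lemma SimpleGraph.Adj.length_eq_dist_iff (h : G.Adj u v) (p : G.Walk u v) :
    p.length = G.dist u v ↔ p = h.toWalk := by
  rw [dist_eq_one_iff_adj.2 h]
  exact ⟨p.eq_toWalk_of_length_eq_one, fun hp => hp ▸ h.length_toWalk⟩

lemma numSP_of_adj (h : G.Adj u v) : numSP G u v = 1 := by
  simp only [numSP, h.length_eq_dist_iff]
  exact Nat.card_unique

lemma numSPthru_of_adj (h : G.Adj u v) (e : Sym2 W) :
    numSPthru G u v e = if e = s(u, v) then 1 else 0 := by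
  have key : ∀ p : G.Walk u v, (p.length = G.dist u v ∧ e ∈ p.edges) ↔
      p = h.toWalk ∧ e = s(u, v) := by
    intro p
    rw [h.length_eq_dist_iff]
    constructor
    · rintro ⟨rfl, he⟩
      simpa [h.edges_toWalk] using he
    · rintro ⟨rfl, rfl⟩
      simp [h.edges_toWalk]
  simp only [numSPthru, key]
  split_ifs with he <;> simp [he]

end ShortestPaths

section VertexDeletion

variable {W : Type*} {G : SimpleGraph W} {S : Finset W}

@[simp]
lemma deleteVerts_adj {u v : W} : (deleteVerts G S).Adj u v ↔ G.Adj u v ∧ u ∉ S ∧ v ∉ S :=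
  Iff.rfl

@[simp]
lemma deleteVerts_empty : deleteVerts G ∅ = G := by
  ext u v
  simp

lemma deleteVerts_eq_bot (h : G.IsVertexCover S) : deleteVerts G S = ⊥ := by
  ext u v
  simp only [deleteVerts_adj, bot_adj, iff_false, not_and, not_not]
  intro huv hu
  simpa [hu] using h huv

lemma not_reachable_deleteVerts {t x : W} (hx : x ∈ S) (hne : t ≠ x) :
    ¬ (deleteVerts G S).Reachable t x := by
  rintro ⟨p⟩
  cases p.reverse with
  | nil => exact hne rfl
  | cons h _ => exact h.2.1 hx

end VertexDeletion

variable {Vsrc Vld : Finset V} {G G0 : SimpleGraph V} {α : ℝ}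

lemma nearestSources_eq_of_forall_adj {t : V} {S : Finset V}
    (hS : (Vsrc.erase t).filter (fun s => G.Reachable t s) = S) (hadj : ∀ s ∈ S, G.Adj t s) :
    nearestSources Vsrc G t = S := by
  rw [nearestSources, hS]
  refine filter_true_of_mem fun s hs s' hs' => ?_
  rw [dist_eq_one_iff_adj.2 (hadj s hs), dist_eq_one_iff_adj.2 (hadj s' hs')]

lemma eload_nonneg (e : Sym2 V) : 0 ≤ eload Vsrc Vld G e := by
  unfold eload
  positivity

lemma eload_singleton_of_forall_adj {t a : V}
    (hadj : ∀ s ∈ nearestSources Vsrc G t, G.Adj s t) (ha : a ∈ nearestSources Vsrc G t) :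
    eload Vsrc {t} G s(a, t) = 1 / #(nearestSources Vsrc G t) := by
  rw [eload, sum_singleton, sum_eq_single a]
  · simp [numSP_of_adj (hadj a ha), numSPthru_of_adj (hadj a ha)]
  · intro s hs hsa
    have hne : s(a, t) ≠ s(s, t) := fun h => hsa (Sym2.congr_left.1 h).symm
    simp [numSPthru_of_adj (hadj s hs), hne]
  · exact fun h => absurd ha h

lemma Fop_le_self : Fop Vsrc Vld G0 α G ≤ G := fun _ _ h => h.1

lemma Fop_eq_self
    (h : ∀ u v, G.Adj u v → eload Vsrc Vld G s(u, v) ≤ (1 + α) * eload Vsrc Vld G0 s(u, v)) :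
    Fop Vsrc Vld G0 α G = G :=
  le_antisymm Fop_le_self fun u v huv => ⟨huv, h u v huv⟩

lemma Fop_self_of_nonneg (hα : 0 ≤ α) : Fop Vsrc Vld G0 α G0 = G0 :=
  Fop_eq_self fun u v _ => le_mul_of_one_le_left (eload_nonneg _) (by linarith)

lemma Fop_bot : Fop Vsrc Vld G0 α ⊥ = ⊥ := le_bot_iff.1 Fop_le_self

lemma Fstar_eq_self (h : Fop Vsrc Vld G0 α G = G) : Fstar Vsrc Vld G0 α G = G :=
  Function.iterate_fixed h _

lemma disc_bot : disc Vsrc Vld ⊥ = #Vld := by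
  simp only [disc, reachable_bot]
  exact congrArg card (filter_true_of_mem fun t _ s _ hst => Ne.symm hst)

lemma disc_eq_zero (h : ∀ t ∈ Vld, ∃ s ∈ Vsrc, s ≠ t ∧ G.Reachable t s) :
    disc Vsrc Vld G = 0 := by
  rw [disc, card_eq_zero, filter_eq_empty_iff]
  intro t ht hcut
  obtain ⟨s, hs, hst, hreach⟩ := h t ht
  exact hcut s hs hst hreach

lemma payoff_of_isVertexCover {Va Vd : Finset V} (h : G0.IsVertexCover ↑(Va \ Vd)) :
    payoff Vsrc Vld G0 α Va Vd = #Vld := by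
  rw [payoff, deleteVerts_eq_bot h, Fstar_eq_self Fop_bot, disc_bot]

lemma payoff_empty (hα : 0 ≤ α) (Vd : Finset V) :
    payoff Vsrc Vld G0 α ∅ Vd = disc Vsrc Vld G0 := by
  rw [payoff, empty_sdiff, deleteVerts_empty, Fstar_eq_self (Fop_self_of_nonneg hα)]

section PathExample

local notation "P₃" => SimpleGraph.pathGraph 3

local notation "pathPayoff" => payoff ({0, 2} : Finset (Fin 3)) ({1} : Finset (Fin 3)) (SimpleGraph.pathGraph 3) 1

lemma pathGraph_three_isVertexCover {S : Finset (Fin 3)} (h : 1 ∈ S ∨ 0 ∈ S ∧ 2 ∈ S) :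
    IsVertexCover P₃ S := by
  intro u v huv
  simp only [mem_coe]
  rw [pathGraph_adj] at huv
  revert S u v
  decide

lemma nearestSources_pathGraph_three : nearestSources {0, 2} P₃ 1 = {0, 2} :=
  nearestSources_eq_of_forall_adj
    (filter_true_of_mem fun _ _ => (pathGraph_preconnected 3) _ _)
    (by simp only [pathGraph_adj]; decide)

lemma eload_pathGraph_three {a : Fin 3} (ha : a ∈ ({0, 2} : Finset (Fin 3))) :
    eload {0, 2} {1} P₃ s(a, 1) = 1 / 2 := by
  rw [eload_singleton_of_forall_adj] <;> rw [nearestSources_pathGraph_three]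
  · simp
  · simp only [pathGraph_adj]; decide
  · exact ha

lemma payoff_delete_one_source {a c : Fin 3} (hsrc : ({0, 2} : Finset (Fin 3)) = {a, c}) :
    pathPayoff {c} ∅ = 0 := by
  obtain ⟨hadj, hedge⟩ : (deleteVerts P₃ {c}).Adj a 1 ∧
      ∀ u v, (deleteVerts P₃ {c}).Adj u v → s(u, v) = s(a, 1) := by
    simp only [deleteVerts_adj, pathGraph_adj]
    revert a c
    decide
  have hN : nearestSources {0, 2} (deleteVerts P₃ {c}) 1 = {a} := by
    refine nearestSources_eq_of_forall_adj ?_ (by simpa using hadj.symm)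
    have hc : ¬ (deleteVerts P₃ {c}).Reachable 1 c :=
      not_reachable_deleteVerts (mem_singleton_self c) fun h => hadj.2.2 (h ▸ mem_singleton_self c)
    rw [erase_eq_of_notMem (by decide), hsrc, filter_insert, filter_singleton,
      if_pos hadj.reachable.symm, if_neg hc, insert_empty]
  have hsurvive : Fop {0, 2} {1} P₃ 1 (deleteVerts P₃ {c}) = deleteVerts P₃ {c} := by
    refine Fop_eq_self fun u v huv => ?_
    rw [hedge u v huv, eload_singleton_of_forall_adj (by simpa [hN] using hadj) (by simp [hN]),
      eload_pathGraph_three (by simp [hsrc]), hN]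
    norm_num
  rw [payoff, sdiff_empty, Fstar_eq_self hsurvive, disc_eq_zero]
  intro t ht
  obtain rfl := mem_singleton.1 ht
  exact ⟨a, by simp [hsrc], hadj.ne, hadj.reachable.symm⟩

lemma payoff_pathGraph_three_empty : pathPayoff ∅ ∅ = 0 := by
  rw [payoff_empty zero_le_one, disc_eq_zero]
  intro t ht
  obtain rfl := mem_singleton.1 ht
  exact ⟨0, by simp, by decide, (pathGraph_preconnected 3) _ _⟩

lemma payoff_pathGraph_three_of_cover {Va : Finset (Fin 3)} (h : 1 ∈ Va ∨ 0 ∈ Va ∧ 2 ∈ Va) :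
    pathPayoff Va ∅ = 1 := by
  rw [payoff_of_isVertexCover (by simpa using pathGraph_three_isVertexCover h), card_singleton]

end PathExample

/-- In the path `a — b — c` (vertices `0,1,2` of `Fin 3`) with `V_src = {a,c}`,
`V_ld = {b}` and `α = 1`, with defense `V_d = ∅` one has `p(∅,∅) = 0`, `p({b},∅) = 1`,
`p({a,c},∅) = 1` and `p({a,b,c},∅) = 1`; hence
`p({a,b,c},∅) − p({a,c},∅) < p({b},∅) − p(∅,∅)`, so `V_a ↦ p(V_a,∅)` is not
supermodular.  Together with the failure of submodularity, the payoff with the defender's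
strategy fixed is neither submodular nor supermodular. -/
theorem path_example_not_supermodular_in_attack :
    payoff ({0, 2} : Finset (Fin 3)) ({1} : Finset (Fin 3)) (SimpleGraph.pathGraph 3) 1 ∅ ∅ = 0 ∧
    payoff ({0, 2} : Finset (Fin 3)) ({1} : Finset (Fin 3)) (SimpleGraph.pathGraph 3) 1 {1} ∅ = 1 ∧
    payoff ({0, 2} : Finset (Fin 3)) ({1} : Finset (Fin 3)) (SimpleGraph.pathGraph 3) 1 {0, 2} ∅ = 1 ∧
    payoff ({0, 2} : Finset (Fin 3)) ({1} : Finset (Fin 3)) (SimpleGraph.pathGraph 3) 1 {0, 1, 2} ∅ = 1 ∧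
    ((payoff ({0, 2} : Finset (Fin 3)) ({1} : Finset (Fin 3)) (SimpleGraph.pathGraph 3) 1 {0, 1, 2} ∅ : ℤ) - (payoff ({0, 2} : Finset (Fin 3)) ({1} : Finset (Fin 3)) (SimpleGraph.pathGraph 3) 1 {0, 2} ∅ : ℤ) <
      (payoff ({0, 2} : Finset (Fin 3)) ({1} : Finset (Fin 3)) (SimpleGraph.pathGraph 3) 1 {1} ∅ : ℤ) - (payoff ({0, 2} : Finset (Fin 3)) ({1} : Finset (Fin 3)) (SimpleGraph.pathGraph 3) 1 ∅ ∅ : ℤ)) ∧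
    ¬ IsSupermodular (fun Va : Finset (Fin 3) => (payoff ({0, 2} : Finset (Fin 3)) ({1} : Finset (Fin 3)) (SimpleGraph.pathGraph 3) 1 Va ∅ : ℤ)) ∧
    ¬ (∀ Vd : Finset (Fin 3), IsSubmodular (fun Va : Finset (Fin 3) => (payoff ({0, 2} : Finset (Fin 3)) ({1} : Finset (Fin 3)) (SimpleGraph.pathGraph 3) 1 Va Vd : ℤ))) ∧
    ¬ (∀ Vd : Finset (Fin 3), IsSupermodular (fun Va : Finset (Fin 3) => (payoff ({0, 2} : Finset (Fin 3)) ({1} : Finset (Fin 3)) (SimpleGraph.pathGraph 3) 1 Va Vd : ℤ))) := by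
  have hempty := payoff_pathGraph_three_empty
  have hb := payoff_pathGraph_three_of_cover (Va := {1}) (by decide)
  have hac := payoff_pathGraph_three_of_cover (Va := {0, 2}) (by decide)
  have habc := payoff_pathGraph_three_of_cover (Va := {0, 1, 2}) (by decide)
  have ha := payoff_delete_one_source (a := 2) (c := 0) (by decide)
  have hc := payoff_delete_one_source (a := 0) (c := 2) (by decide)
  have hsuper : ¬ IsSupermodular fun Va : Finset (Fin 3) =>
      (payoff ({0, 2} : Finset (Fin 3)) {1} (pathGraph 3) 1 Va ∅ : ℤ) := fun h => by
    have := h (empty_subset {0, 2}) 1 (by decide)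
    simp only [insert_empty,
      show insert (1 : Fin 3) ({0, 2} : Finset (Fin 3)) = {0, 1, 2} by decide] at this
    omega
  refine ⟨hempty, hb, hac, habc, by omega, hsuper, fun h => ?_, fun h => hsuper (h ∅)⟩
  have := h ∅ (empty_subset {0}) 2 (by decide)
  simp only [insert_empty,
    show insert (2 : Fin 3) ({0} : Finset (Fin 3)) = {0, 2} by decide] at this
  omega

end
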